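/- Suppose sup_{x∈E} k(x,x) = c < ∞, let z be a finite measure on E with kernel mean embedding μ_z := ∫_E φ(x) dz(x) ∈ 𝓗 satisfying μ_z ∈ dom(C(0)^†), let γ > 0, and let μ̂_z ∈ 𝓗 be any estimate of μ_z with ‖μ̂_z‖_𝓗 ≤ c^{1/2}. Then P-almost everywhere ‖U_n^{(γ)} μ̂_z − U μ_z‖_𝓗 ≤ e_s + e_r, where U := C(η) C(0)^†, U_n^{(γ)} := C_n(η) (C_n(0) + γ·Id)^{-1}, e_s := (c/γ)‖μ̂_z − μ_z‖_𝓗 + (c^{3/2}/γ²)‖C_n(0) − C(0)‖ + (c^{1/2}/γ)‖C_n(η) − C(η)‖ (operator norms), and e_r := c·‖(C(0) + γ·Id)^{-1} μ_z − C(0)^† μ_z‖_𝓗. -/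

import Mathlib

/- Error decomposition for the kernel sum rule / conditional mean embedding:
almost everywhere,
`‖U_n^{(γ)} μ̂_z − U μ_z‖ ≤ e_s + e_r` with
`e_s = (c/γ)‖μ̂_z − μ_z‖ + (c^{3/2}/γ²)‖C_n(0) − C(0)‖ + (c^{1/2}/γ)‖C_n(η) − C(η)‖`
and `e_r = c‖(C(0) + γId)^{-1} μ_z − C(0)^† μ_z‖`, where
`U = C(η) C(0)^†` and `U_n^{(γ)} = C_n(η) (C_n(0) + γId)^{-1}`.
The Moore–Penrose pseudoinverse applied to μ_z is encoded by the element `u`: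
`μ_z = C(0) u + w` with `w ⊥ range C(0)` (i.e. μ_z ∈ dom C(0)^†) and `u` the
minimal-norm solution, so that `C(0)^† μ_z = u`. -/

open MeasureTheory Filter
open scoped RealInnerProductSpace Topology

/-- The rank-one operator `y ⊗ x : z ↦ ⟪x, z⟫ • y` on a real Hilbert space. -/
noncomputable def rankOne {H : Type*} [NormedAddCommGroup H] [InnerProductSpace ℝ H]
    (y x : H) : H →L[ℝ] H :=
  (innerSL ℝ x).smulRight y

section
variable {Ω : Type*} [MeasurableSpace Ω] (P : Measure Ω)
  {E : Type*} {H : Type*} [NormedAddCommGroup H] [InnerProductSpace ℝ H]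
  [CompleteSpace H]
  (X : ℤ → Ω → E) (φ : E → H) (η : ℤ)

/-- The kernel autocovariance operator `C(η) = E[φ(X_η) ⊗ φ(X₀)]` on `H`
(`η = 0` gives the covariance operator `C(0)`). -/
noncomputable def CetaOp : H →L[ℝ] H :=
  ∫ ω, rankOne (φ (X η ω)) (φ (X 0 ω)) ∂P

/-- The empirical autocovariance operator
`C_n(η) = (1/n) ∑_{t=1}^n φ(X_{t+η}) ⊗ φ(X_t)` on `H`. -/
noncomputable def CetaEmp (n : ℕ) (ω : Ω) : H →L[ℝ] H :=
  (n : ℝ)⁻¹ • ∑ t ∈ Finset.Icc 1 n, rankOne (φ (X ((t : ℤ) + η) ω)) (φ (X (t : ℤ) ω))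

end


section
variable {H : Type*} [NormedAddCommGroup H] [InnerProductSpace ℝ H]

lemma rankOne_apply' (y x z : H) : rankOne y x z = ⟪x, z⟫ • y := rfl

lemma norm_rankOne_le' (y x : H) : ‖rankOne y x‖ ≤ ‖y‖ * ‖x‖ := by
  refine ContinuousLinearMap.opNorm_le_bound _ (by positivity) fun z => ?_
  rw [rankOne_apply', norm_smul, Real.norm_eq_abs]
  calc |⟪x, z⟫| * ‖y‖ ≤ ‖x‖ * ‖z‖ * ‖y‖ := by
        gcongr
        exact abs_real_inner_le_norm _ _
    _ = ‖y‖ * ‖x‖ * ‖z‖ := by ring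

lemma isUnit_and_norm' [CompleteSpace H] {γ : ℝ} (hγ : 0 < γ) (S : H →L[ℝ] H)
    (hS : ∀ x : H, 0 ≤ ⟪S x, x⟫) :
    IsUnit (S + γ • (1 : H →L[ℝ] H)) ∧
      ‖Ring.inverse (S + γ • (1 : H →L[ℝ] H))‖ ≤ γ⁻¹ := by
  set T := S + γ • (1 : H →L[ℝ] H) with hT
  have happ : ∀ x : H, T x = S x + γ • x := fun x => by
    simp [hT, ContinuousLinearMap.add_apply]
  have hcoer : ∀ x : H, γ * ‖x‖ ^ 2 ≤ ⟪T x, x⟫ := fun x => by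
    rw [happ, inner_add_left, real_inner_smul_left, real_inner_self_eq_norm_sq]
    nlinarith [hS x]
  have hunit : IsUnit T := by
    refine ContinuousLinearMap.isUnit_of_forall_le_norm_inner_map T
      (c := ⟨γ, hγ.le⟩) (by exact_mod_cast hγ) fun x => ?_
    have h1 := hcoer x
    have h2 : (0:ℝ) ≤ ⟪T x, x⟫ := le_trans (by positivity) h1
    rw [Real.norm_eq_abs, abs_of_nonneg h2]
    calc ‖x‖ ^ 2 * (⟨γ, hγ.le⟩ : NNReal) = γ * ‖x‖ ^ 2 := by
          push_cast; ring
      _ ≤ _ := h1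
  have hlow : ∀ x : H, γ * ‖x‖ ≤ ‖T x‖ := fun x => by
    rcases eq_or_ne x 0 with rfl | hx
    · simp
    · have h1 : γ * ‖x‖ ^ 2 ≤ ‖T x‖ * ‖x‖ := (hcoer x).trans (real_inner_le_norm _ _)
      have hxpos : 0 < ‖x‖ := norm_pos_iff.mpr hx
      nlinarith
  refine ⟨hunit, ?_⟩
  refine ContinuousLinearMap.opNorm_le_bound _ (by positivity) fun y => ?_
  have hTy : T (Ring.inverse T y) = y := by
    have h := Ring.mul_inverse_cancel T hunit
    calc T (Ring.inverse T y) = (T * Ring.inverse T) y := rfl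
      _ = y := by rw [h]; rfl
  have h2 := hlow (Ring.inverse T y)
  rw [hTy] at h2
  calc ‖Ring.inverse T y‖ = γ⁻¹ * (γ * ‖Ring.inverse T y‖) := by field_simp
    _ ≤ γ⁻¹ * ‖y‖ := mul_le_mul_of_nonneg_left h2 (by positivity)


lemma cetaEmp_zero_pos {Ω E : Type*} (X : ℤ → Ω → E) (φ : E → H) (n : ℕ) (ω : Ω) (x : H) :
    0 ≤ ⟪CetaEmp X φ 0 n ω x, x⟫ := by
  have h : ⟪CetaEmp X φ 0 n ω x, x⟫
      = (n : ℝ)⁻¹ * ∑ t ∈ Finset.Icc 1 n,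
          (⟪φ (X (t : ℤ) ω), x⟫ * ⟪φ (X (t : ℤ) ω), x⟫) := by
    simp only [CetaEmp, add_zero, ContinuousLinearMap.smul_apply,
      ContinuousLinearMap.sum_apply, rankOne_apply', real_inner_smul_left, sum_inner,
      inner_smul_left, conj_trivial]
  rw [h]
  apply mul_nonneg (by positivity)
  exact Finset.sum_nonneg fun t _ => mul_self_nonneg _


lemma cetaOp_zero_pos {Ω : Type*} [MeasurableSpace Ω] (P : Measure Ω) {E : Type*}
    [CompleteSpace H] (X : ℤ → Ω → E) (φ : E → H) (x : H) :
    0 ≤ ⟪CetaOp P X φ 0 x, x⟫ := by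
  by_cases hint : Integrable (fun ω => rankOne (φ (X 0 ω)) (φ (X 0 ω)) : Ω → H →L[ℝ] H) P
  · set L : (H →L[ℝ] H) →L[ℝ] ℝ :=
      (innerSL ℝ x).comp (ContinuousLinearMap.apply ℝ H x) with hL
    have h2 : ⟪CetaOp P X φ 0 x, x⟫
        = ∫ ω, ⟪x, rankOne (φ (X 0 ω)) (φ (X 0 ω)) x⟫ ∂P := by
      rw [real_inner_comm]
      calc ⟪x, CetaOp P X φ 0 x⟫ = L (CetaOp P X φ 0) := rfl
        _ = ∫ ω, L (rankOne (φ (X 0 ω)) (φ (X 0 ω))) ∂P := by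
            rw [CetaOp, L.integral_comp_comm hint]
        _ = _ := rfl
    rw [h2]
    refine integral_nonneg fun ω => ?_
    rw [rankOne_apply', real_inner_smul_right, real_inner_comm]
    exact mul_self_nonneg _
  · rw [CetaOp, integral_undef hint]
    simp

lemma norm_cetaOp_le {Ω : Type*} [MeasurableSpace Ω] (P : Measure Ω) [IsProbabilityMeasure P]
    {E : Type*} [CompleteSpace H] (X : ℤ → Ω → E) (φ : E → H) (η : ℤ) {c : ℝ} (hc0 : 0 ≤ c)
    (hφn : ∀ e : E, ‖φ e‖ ≤ Real.sqrt c) :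
    ‖CetaOp P X φ η‖ ≤ c := by
  have hb : ∀ ω : Ω, ‖rankOne (φ (X η ω)) (φ (X 0 ω))‖ ≤ c := fun ω => by
    refine (norm_rankOne_le' _ _).trans ?_
    calc ‖φ (X η ω)‖ * ‖φ (X 0 ω)‖ ≤ Real.sqrt c * Real.sqrt c :=
          mul_le_mul (hφn _) (hφn _) (norm_nonneg _) (Real.sqrt_nonneg c)
      _ = c := Real.mul_self_sqrt hc0
  by_cases hint : Integrable (fun ω => rankOne (φ (X η ω)) (φ (X 0 ω)) : Ω → H →L[ℝ] H) P
  · calc ‖CetaOp P X φ η‖ ≤ ∫ ω, ‖rankOne (φ (X η ω)) (φ (X 0 ω))‖ ∂P :=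
          norm_integral_le_integral_norm _
      _ ≤ ∫ _ω, c ∂P := integral_mono hint.norm (integrable_const c) hb
      _ = c := by simp
  · rw [CetaOp, integral_undef hint]
    simpa using hc0

lemma norm_cetaEmp_le {Ω E : Type*} (X : ℤ → Ω → E) (φ : E → H) (η : ℤ) (n : ℕ) (ω : Ω)
    {c : ℝ} (hc0 : 0 ≤ c) (hφn : ∀ e : E, ‖φ e‖ ≤ Real.sqrt c) :
    ‖CetaEmp X φ η n ω‖ ≤ c := by
  have hb : ∀ t : ℕ, ‖rankOne (φ (X ((t:ℤ) + η) ω)) (φ (X (t:ℤ) ω))‖ ≤ c := fun t => by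
    refine (norm_rankOne_le' _ _).trans ?_
    calc ‖φ (X ((t:ℤ)+η) ω)‖ * ‖φ (X (t:ℤ) ω)‖ ≤ Real.sqrt c * Real.sqrt c :=
          mul_le_mul (hφn _) (hφn _) (norm_nonneg _) (Real.sqrt_nonneg c)
      _ = c := Real.mul_self_sqrt hc0
  rcases Nat.eq_zero_or_pos n with rfl | hn
  · simp only [CetaEmp]
    simpa using hc0
  · rw [CetaEmp]
    refine le_trans (ContinuousLinearMap.opNorm_smul_le _ _) ?_
    rw [Real.norm_eq_abs, abs_of_nonneg (by positivity : (0:ℝ) ≤ ((n:ℝ))⁻¹)]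
    have h1 : ‖∑ t ∈ Finset.Icc 1 n, rankOne (φ (X ((t:ℤ)+η) ω)) (φ (X (t:ℤ) ω))‖
        ≤ (n:ℝ) * c := by
      calc _ ≤ ∑ t ∈ Finset.Icc 1 n, ‖rankOne (φ (X ((t:ℤ)+η) ω)) (φ (X (t:ℤ) ω))‖ :=
            norm_sum_le _ _
        _ ≤ ∑ _t ∈ Finset.Icc 1 n, c := Finset.sum_le_sum fun t _ => hb t
        _ = (n:ℝ) * c := by
            rw [Finset.sum_const, Nat.card_Icc]
            simp [nsmul_eq_mul]
    have hn' : (0:ℝ) < (n:ℝ) := by exact_mod_cast hn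
    calc ((n:ℝ))⁻¹ * ‖∑ t ∈ Finset.Icc 1 n, rankOne (φ (X ((t:ℤ)+η) ω)) (φ (X (t:ℤ) ω))‖
        ≤ ((n:ℝ))⁻¹ * ((n:ℝ) * c) := mul_le_mul_of_nonneg_left h1 (by positivity)
      _ = c := by field_simp

end

theorem kernel_sum_rule_error_bound
    {Ω : Type*} [MeasurableSpace Ω] (P : Measure Ω) [IsProbabilityMeasure P]
    {E : Type*} [TopologicalSpace E] [PolishSpace E] [MeasurableSpace E] [BorelSpace E]
    {H : Type*} [NormedAddCommGroup H] [InnerProductSpace ℝ H] [CompleteSpace H]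
      [SecondCountableTopology H] [MeasurableSpace H] [BorelSpace H]
    -- the stationary process
    (X : ℤ → Ω → E) (hXm : ∀ t, Measurable (X t))
    (hstat : ∀ (r : ℕ) (t : Fin r → ℤ) (s : ℤ),
      Measure.map (fun ω => fun i => X (t i) ω) P
        = Measure.map (fun ω => fun i => X (t i + s) ω) P)
    -- feature map, kernel bound sup_x k(x,x) = c, centering
    (φ : E → H) (hφ : Measurable φ) (c : ℝ)
    (hc : ∀ x : E, ⟪φ x, φ x⟫ ≤ c)
    (hcent : ∫ ω, φ (X 0 ω) ∂P = 0)
    -- the time lag and the regularization parameter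
    (η : ℕ) (γ : ℝ) (hγ : 0 < γ)
    -- the prior: a finite measure z on E with kernel mean embedding μ_z
    (z : Measure E) (hz : IsFiniteMeasure z)
    (hφz : Integrable φ z)
    (μz : H) (hμz : μz = ∫ x, φ x ∂z) (hμznorm : ‖μz‖ ≤ Real.sqrt c)
    -- μ_z ∈ dom C(0)^†, encoded by the decomposition μ_z = C(0)u + w with
    -- w ⊥ range C(0) and u the minimal-norm solution; then C(0)^† μ_z = u
    (u w : H)
    (hdecomp : μz = CetaOp P X φ 0 u + w)
    (hw : ∀ v : H, ⟪w, CetaOp P X φ 0 v⟫ = 0)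
    (humin : ∀ u' : H, CetaOp P X φ 0 u' = CetaOp P X φ 0 u → ‖u‖ ≤ ‖u'‖)
    -- the empirical estimate μ̂_z of the embedded prior
    (μhat : H) (hμhatnorm : ‖μhat‖ ≤ Real.sqrt c) :
    ∀ᵐ ω ∂P, ∀ n : ℕ,
      ‖((CetaEmp X φ (η : ℤ) n ω).comp
          (Ring.inverse (CetaEmp X φ 0 n ω + γ • (1 : H →L[ℝ] H)))) μhat
        - CetaOp P X φ (η : ℤ) u‖
      ≤ -- stochastic estimation error e_s
        (c / γ) * ‖μhat - μz‖
          + (c * Real.sqrt c / γ ^ 2) * ‖CetaEmp X φ 0 n ω - CetaOp P X φ 0‖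
          + (Real.sqrt c / γ) * ‖CetaEmp X φ (η : ℤ) n ω - CetaOp P X φ (η : ℤ)‖
        -- deterministic regularization error e_r
        + c * ‖(Ring.inverse (CetaOp P X φ 0 + γ • (1 : H →L[ℝ] H))) μz - u‖ := by

  have hne : Nonempty Ω := by
    rcases isEmpty_or_nonempty Ω with h | h
    · exfalso
      have h1 : P Set.univ = 1 := measure_univ
      rw [Set.univ_eq_empty_iff.mpr h, measure_empty] at h1
      exact zero_ne_one h1
    · exact h
  obtain ⟨ω0⟩ := hne
  have hc0 : (0:ℝ) ≤ c := le_trans real_inner_self_nonneg (hc (X 0 ω0))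
  have hφn : ∀ e : E, ‖φ e‖ ≤ Real.sqrt c := fun e => by
    rw [← Real.sqrt_sq (norm_nonneg (φ e))]
    apply Real.sqrt_le_sqrt
    rw [← real_inner_self_eq_norm_sq]
    exact hc e
  set s := Real.sqrt c with hsdef
  have hs : s * s = c := Real.mul_self_sqrt hc0
  have hs0 : 0 ≤ s := Real.sqrt_nonneg c
  refine Filter.Eventually.of_forall fun ω n => ?_
  set A : H →L[ℝ] H := CetaOp P X φ 0 with hA
  set B : H →L[ℝ] H := CetaOp P X φ (η:ℤ) with hB
  set An : H →L[ℝ] H := CetaEmp X φ 0 n ω with hAn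
  set Bn : H →L[ℝ] H := CetaEmp X φ (η:ℤ) n ω with hBn
  set Tn : H →L[ℝ] H := An + γ • (1 : H →L[ℝ] H) with hTn
  set T : H →L[ℝ] H := A + γ • (1 : H →L[ℝ] H) with hT
  obtain ⟨hTnunit, hTnnorm⟩ := isUnit_and_norm' hγ An (fun x => cetaEmp_zero_pos X φ n ω x)
  obtain ⟨hTunit, hTnorm⟩ := isUnit_and_norm' hγ A (fun x => cetaOp_zero_pos P X φ x)
  have hAnorm : ‖A‖ ≤ c := norm_cetaOp_le P X φ 0 hc0 hφn
  have hBnorm : ‖B‖ ≤ c := norm_cetaOp_le P X φ (η:ℤ) hc0 hφn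
  have hBnnorm : ‖Bn‖ ≤ c := norm_cetaEmp_le X φ (η:ℤ) n ω hc0 hφn
  set Rn : H →L[ℝ] H := Ring.inverse Tn with hRn
  set R : H →L[ℝ] H := Ring.inverse T with hR
  -- resolvent identity
  have hres : Rn - R = Rn * (A - An) * R := by
    have h1 : A - An = T - Tn := by rw [hT, hTn]; abel
    rw [h1]
    have h2 : Rn * (T - Tn) * R = Rn * (T * R) - (Rn * Tn) * R := by noncomm_ring
    rw [h2, hR, Ring.mul_inverse_cancel T hTunit, hRn, Ring.inverse_mul_cancel Tn hTnunit,
      mul_one, one_mul]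
  -- decomposition
  have hdec : (Bn.comp Rn) μhat - B u
      = Bn (Rn (μhat - μz)) + (Bn - B) (Rn μz) + ((Rn - R) μz |> B)
        + B (R μz - u) := by
    simp only [ContinuousLinearMap.comp_apply, map_sub, ContinuousLinearMap.sub_apply]
    abel
  -- individual bounds
  have eRn : ∀ v : H, ‖Rn v‖ ≤ γ⁻¹ * ‖v‖ := fun v =>
    (Rn.le_opNorm v).trans (mul_le_mul_of_nonneg_right hTnnorm (norm_nonneg v))
  have eR : ∀ v : H, ‖R v‖ ≤ γ⁻¹ * ‖v‖ := fun v =>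
    (R.le_opNorm v).trans (mul_le_mul_of_nonneg_right hTnorm (norm_nonneg v))
  have hb1 : ‖Bn (Rn (μhat - μz))‖ ≤ c * (γ⁻¹ * ‖μhat - μz‖) :=
    (Bn.le_opNorm _).trans (mul_le_mul hBnnorm (eRn _) (norm_nonneg _) hc0)
  have hb2 : ‖(Bn - B) (Rn μz)‖ ≤ ‖Bn - B‖ * (γ⁻¹ * s) := by
    refine ((Bn - B).le_opNorm _).trans (mul_le_mul_of_nonneg_left ?_ (norm_nonneg _))
    exact (eRn μz).trans (mul_le_mul_of_nonneg_left hμznorm (by positivity))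
  have hb3 : ‖B ((Rn - R) μz)‖ ≤ c * (γ⁻¹ * (‖An - A‖ * (γ⁻¹ * s))) := by
    have happ : (Rn - R) μz = Rn ((A - An) (R μz)) := by
      rw [hres]
      simp [ContinuousLinearMap.mul_apply]
    rw [happ]
    have e0 : ‖R μz‖ ≤ γ⁻¹ * s :=
      (eR μz).trans (mul_le_mul_of_nonneg_left hμznorm (by positivity))
    have e1 : ‖(A - An) (R μz)‖ ≤ ‖An - A‖ * (γ⁻¹ * s) := by
      rw [norm_sub_rev An A]
      exact ((A - An).le_opNorm _).trans (mul_le_mul_of_nonneg_left e0 (norm_nonneg _))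
    have e2 : ‖Rn ((A - An) (R μz))‖ ≤ γ⁻¹ * (‖An - A‖ * (γ⁻¹ * s)) :=
      (eRn _).trans (mul_le_mul_of_nonneg_left e1 (by positivity))
    exact (B.le_opNorm _).trans
      (mul_le_mul hBnorm e2 (norm_nonneg _) hc0)
  have hb4 : ‖B (R μz - u)‖ ≤ c * ‖R μz - u‖ :=
    (B.le_opNorm _).trans (mul_le_mul_of_nonneg_right hBnorm (norm_nonneg _))
  calc ‖(Bn.comp Rn) μhat - B u‖
      = ‖Bn (Rn (μhat - μz)) + (Bn - B) (Rn μz) + B ((Rn - R) μz) + B (R μz - u)‖ := by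
        rw [hdec]
    _ ≤ ‖Bn (Rn (μhat - μz)) + (Bn - B) (Rn μz) + B ((Rn - R) μz)‖ + ‖B (R μz - u)‖ :=
        norm_add_le _ _
    _ ≤ (‖Bn (Rn (μhat - μz)) + (Bn - B) (Rn μz)‖ + ‖B ((Rn - R) μz)‖) + ‖B (R μz - u)‖ := by
        gcongr
        exact norm_add_le _ _
    _ ≤ ((‖Bn (Rn (μhat - μz))‖ + ‖(Bn - B) (Rn μz)‖) + ‖B ((Rn - R) μz)‖) + ‖B (R μz - u)‖ := by
        gcongr
        exact norm_add_le _ _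
    _ ≤ ((c * (γ⁻¹ * ‖μhat - μz‖) + ‖Bn - B‖ * (γ⁻¹ * s))
          + c * (γ⁻¹ * (‖An - A‖ * (γ⁻¹ * s)))) + c * ‖R μz - u‖ := by
        exact add_le_add (add_le_add (add_le_add hb1 hb2) hb3) hb4
    _ = (c / γ) * ‖μhat - μz‖ + (c * s / γ ^ 2) * ‖An - A‖ + (s / γ) * ‖Bn - B‖
          + c * ‖R μz - u‖ := by
        field_simp
        ring
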